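/- arXiv:0704.3222 — 2 statements merged into one kernel-verified Lean document; each statement's English description precedes it below -/
import Mathlib

section
/- If u : ℝ^N → {0, 1} is measurable and integrable, and κ : ℝ^N → [0, ∞) is integrable with ∫ κ = 1, then 2 ∫_{ℝ^N} u (κ * u) = 2 ∫ u − ∫∫ |u(x) − u(y)| κ(x − y) dx dy, using that (u(x) − u(y))² = |u(x) − u(y)| for {0,1}-valued u. -/
open MeasureTheory
open scoped Convolution
set_option maxHeartbeats 1000000

/-- For `{0,1}`-valued integrable `u` and a nonnegative kernel `κ` with
`∫ κ = 1`: `2 ∫ u (κ * u) = 2 ∫ u − ∫∫ |u(x) − u(y)| κ(x − y) dx dy`. -/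
theorem mollified_quadratic_identity (N : ℕ) (u κ : (Fin N → ℝ) → ℝ)
    (hu : Integrable u) (hκ : Integrable κ)
    (hu01 : ∀ᵐ x : Fin N → ℝ, u x = 0 ∨ u x = 1)
    (hκ0 : ∀ x, 0 ≤ κ x) (hκ1 : ∫ x : Fin N → ℝ, κ x = 1) :
    2 * (∫ x : Fin N → ℝ, u x * ∫ y : Fin N → ℝ, κ (x - y) * u y)
      = 2 * (∫ x : Fin N → ℝ, u x)
        - ∫ x : Fin N → ℝ, ∫ y : Fin N → ℝ, |u x - u y| * κ (x - y) := by
  set c : (Fin N → ℝ) → ℝ := fun x => ∫ y : (Fin N → ℝ), κ (x - y) * u y with hc_def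
  -- product integrability of (x, y) ↦ u y * κ (x - y)
  have hprod : Integrable (fun p : (Fin N → ℝ) × (Fin N → ℝ) => u p.2 * κ (p.1 - p.2))
      ((volume : Measure (Fin N → ℝ)).prod volume) := by
    simpa [ContinuousLinearMap.lsmul_apply, smul_eq_mul] using
      hu.convolution_integrand (ContinuousLinearMap.lsmul ℝ ℝ) hκ
  -- c equals the convolution u ⋆ κ
  have hc_conv : c = (u ⋆[ContinuousLinearMap.lsmul ℝ ℝ, volume] κ) := by
    funext x
    simp only [hc_def, convolution_def, ContinuousLinearMap.lsmul_apply, smul_eq_mul]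
    exact integral_congr_ae (Filter.Eventually.of_forall fun y => mul_comm _ _)
  have hc_int : Integrable c := by
    rw [hc_conv]; exact hu.integrable_convolution _ hκ
  have hc_intval : ∫ x : (Fin N → ℝ), c x = ∫ x : (Fin N → ℝ), u x := by
    rw [hc_conv, integral_convolution _ hu hκ]
    simp [hκ1]
  -- u * c is integrable (since |u| ≤ 1 a.e.)
  have huc_int : Integrable (fun x => u x * c x) := by
    refine Integrable.mono' hc_int.abs
      (hu.aestronglyMeasurable.mul hc_int.aestronglyMeasurable) ?_
    filter_upwards [hu01] with x hx
    rcases hx with h | h <;> simp [h, abs_mul, abs_abs, abs_nonneg]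
  -- a.e. x, the section y ↦ u y * κ (x - y) is integrable
  have hsec : ∀ᵐ x : (Fin N → ℝ), Integrable (fun y => u y * κ (x - y)) :=
    ((integrable_prod_iff hprod.aestronglyMeasurable).mp hprod).1
  have hκx : ∀ x : (Fin N → ℝ), Integrable (fun y => κ (x - y)) := fun x =>
    hκ.comp_sub_left x
  -- inner integral identity
  have hinner : ∀ᵐ x : (Fin N → ℝ), (∫ y : (Fin N → ℝ), |u x - u y| * κ (x - y))
      = u x + c x - 2 * (u x * c x) := by
    filter_upwards [hu01, hsec] with x hx hix
    have hae : ∀ᵐ y : (Fin N → ℝ), |u x - u y| * κ (x - y)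
        = u x * κ (x - y) + u y * κ (x - y) - (2 * u x) * (u y * κ (x - y)) := by
      filter_upwards [hu01] with y hy
      rcases hx with h1 | h1 <;> rcases hy with h2 | h2 <;>
        simp [h1, h2] <;> ring
    rw [integral_congr_ae hae]
    have h1 : Integrable (fun y => u x * κ (x - y)) := (hκx x).const_mul _
    have h3 : Integrable (fun y => (2 * u x) * (u y * κ (x - y))) := hix.const_mul _
    have h12 : Integrable (fun y => u x * κ (x - y) + u y * κ (x - y)) := h1.add hix
    rw [integral_sub h12 h3, integral_add h1 hix, integral_const_mul,
      integral_const_mul]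
    have hκ1x : ∫ y : (Fin N → ℝ), κ (x - y) = 1 := by
      rw [integral_sub_left_eq_self κ volume x, hκ1]
    have hcx : ∫ y : (Fin N → ℝ), u y * κ (x - y) = c x := by
      simp only [hc_def]
      exact integral_congr_ae (Filter.Eventually.of_forall fun y => mul_comm _ _)
    rw [hκ1x, hcx]; ring
  have houter : (∫ x : (Fin N → ℝ), ∫ y : (Fin N → ℝ), |u x - u y| * κ (x - y))
      = (∫ x : (Fin N → ℝ), u x) + (∫ x : (Fin N → ℝ), c x) - 2 * ∫ x : (Fin N → ℝ), u x * c x := by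
    have hadd : Integrable (fun x => u x + c x) := hu.add hc_int
    have h2 : Integrable (fun x => 2 * (u x * c x)) := huc_int.const_mul 2
    rw [integral_congr_ae hinner, integral_sub hadd h2,
      integral_add hu hc_int, integral_const_mul]
  rw [houter, hc_intval]
  ring
end

section
/- Splicing decreases energy on ℝ: given an admissible pair (u, v) whose support has a gap (x₁, x₂) on which the Poisson potential φ is linear with slope φ'_{12}, and translating the right part left by a ∈ (0, x₂−x₁] as in (ū, v̄), the new Poisson potential φ̃ satisfies ∫(φ̃')² = ∫(φ')² − a(φ'_{12})², and if additionally no interface penalization increases (the joined interfaces satisfy the triangle inequality d_{kl} ≤ d_{kj} + d_{jl}), then F₁(ū, v̄) ≤ F₁(u, v), with strict inequality in the H^{-1} term unless φ'_{12} = 0. -/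
open MeasureTheory Set

/-!
Away from the two break points `x₁` and `x₃ - a`, the spliced potential is locally `φ`, a
translate of `φ` plus a constant, or a constant, so `φ̃'` is `φ'` on `(-∞, x₁]`, `φ'(· + a)` on
`(x₁, x₃ - a]` and `0` beyond. Hence `∫ (φ̃')²` is `∫ (φ')²` with exactly the stretch
`[x₁, x₁ + a]` of the gap cut out; there `(φ')² = s²`, and `φ' = 0` on `(x₃, ∞)` loses nothing.
-/

theorem deriv_piecewise_ae_eq (f g : ℝ → ℝ) (c b k : ℝ) :
    deriv (fun x => if x ≤ c then f x else if x < b then g x else k) =ᵐ[volume]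
      fun x => if x ≤ c then deriv f x else if x ≤ b then deriv g x else 0 := by
  filter_upwards [volume.ae_ne c, volume.ae_ne b] with x hc hb
  rcases hc.lt_or_gt with hxc | hxc
  · have : (fun x => if x ≤ c then f x else if x < b then g x else k) =ᶠ[nhds x] f := by
      filter_upwards [Iic_mem_nhds hxc] with y hy
      simp [mem_Iic.1 hy]
    simp [this.deriv_eq, hxc.le]
  rcases hb.lt_or_gt with hxb | hxb
  · have : (fun x => if x ≤ c then f x else if x < b then g x else k) =ᶠ[nhds x] g := by
      filter_upwards [Ioo_mem_nhds hxc hxb] with y hy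
      simp [not_le.2 hy.1, hy.2]
    simp [this.deriv_eq, not_le.2 hxc, hxb.le]
  · have : (fun x => if x ≤ c then f x else if x < b then g x else k) =ᶠ[nhds x] fun _ => k := by
      filter_upwards [Ioi_mem_nhds hxc, Ici_mem_nhds hxb] with y hyc hyb
      simp [not_le.2 (mem_Ioi.1 hyc), not_lt.2 (mem_Ici.1 hyb)]
    simp [this.deriv_eq, not_le.2 hxc, not_le.2 hxb]

theorem integral_piecewise_Iic_Ioc (F G : ℝ → ℝ) {c b : ℝ} (hcb : c ≤ b)
    (hF : IntegrableOn F (Iic c)) (hG : IntegrableOn G (Ioc c b)) :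
    ∫ x, (if x ≤ c then F x else if x ≤ b then G x else 0) =
      (∫ x in Iic c, F x) + ∫ x in c..b, G x := by
  have hsplit : ∀ x, (if x ≤ c then F x else if x ≤ b then G x else 0) =
      (Iic c).indicator F x + (Ioc c b).indicator G x := by
    intro x
    by_cases hxc : x ≤ c
    · simp [hxc, indicator, not_lt.2 hxc]
    · simp [hxc, indicator, not_le.1 hxc]
  simp_rw [hsplit]
  rw [integral_add (hF.integrable_indicator measurableSet_Iic)
    (hG.integrable_indicator measurableSet_Ioc), integral_indicator measurableSet_Iic,
    integral_indicator measurableSet_Ioc, intervalIntegral.integral_of_le hcb]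

theorem integral_eq_of_const_on_Icc_of_zero_on_Ioi {f : ℝ → ℝ} (hf : Integrable f) {c a b s : ℝ}
    (ha : 0 ≤ a) (hconst : ∀ x ∈ Icc c (c + a), f x = s) (hzero : ∀ x ∈ Ioi b, f x = 0) :
    ∫ x, f x = (∫ x in Iic c, f x) + a * s + ∫ x in c + a..b, f x := by
  have hgap : ∫ x in c..c + a, f x = a * s := by
    rw [intervalIntegral.integral_congr (g := fun _ => s), intervalIntegral.integral_const,
      smul_eq_mul, add_sub_cancel_left]
    intro x hx
    exact hconst x (by rwa [uIcc_of_le (by linarith)] at hx)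
  have htail : ∫ x in Ioi b, f x = 0 := setIntegral_eq_zero_of_forall_eq_zero hzero
  have hleft := intervalIntegral.integral_Iic_sub_Iic (a := c) (b := b) hf.integrableOn
    hf.integrableOn
  rw [← intervalIntegral.integral_add_adjacent_intervals (b := c + a) hf.intervalIntegrable
    hf.intervalIntegrable, hgap] at hleft
  rw [← intervalIntegral.integral_Iic_add_Ioi hf.integrableOn hf.integrableOn, htail]
  linarith

theorem integral_sq_deriv_splice {φ : ℝ → ℝ} (hφ : Integrable fun x => deriv φ x ^ 2)
    {c b : ℝ} (hcb : c ≤ b) (a K₁ K₂ K₃ : ℝ) :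
    ∫ x, deriv (fun x => if x ≤ c then φ x else if x < b then φ (x + a) - K₁ + K₂ else K₃) x ^ 2
      = (∫ x in Iic c, deriv φ x ^ 2) + ∫ x in c + a..b + a, deriv φ x ^ 2 := by
  have hderiv := deriv_piecewise_ae_eq φ (fun x => φ (x + a) - K₁ + K₂) c b K₃
  simp only [deriv_add_const, deriv_sub_const, deriv_comp_add_const] at hderiv
  rw [integral_congr_ae (hderiv.mono fun x hx => congrArg (· ^ 2) hx),
    ← intervalIntegral.integral_comp_add_right,
    ← integral_piecewise_Iic_Ioc _ _ hcb hφ.integrableOn (hφ.comp_add_right a).integrableOn]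
  congr with x
  split_ifs <;> simp

theorem splice_decreases_energy_general (x₁ x₂ x₃ a s : ℝ)
    (h23 : x₂ < x₃) (ha : 0 < a) (ha' : a ≤ x₂ - x₁)
    (φ : ℝ → ℝ)
    (hL2 : Integrable (fun x => (deriv φ x) ^ 2))
    (hs : ∀ x ∈ Set.Icc x₁ x₂, deriv φ x = s)
    (h0 : ∀ x ∈ Set.Ici x₃, deriv φ x = 0)
    (φt : ℝ → ℝ)
    (hφt : φt = fun x =>
      if x ≤ x₁ then φ x
      else if x < x₃ - a then φ (x + a) - φ (x₁ + a) + φ x₁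
      else φ x₃ - φ (x₁ + a) + φ x₁)
    (Iold Inew : ℝ) (hI : Inew ≤ Iold) :
    (∫ x : ℝ, (deriv φt x) ^ 2 = (∫ x : ℝ, (deriv φ x) ^ 2) - a * s ^ 2) ∧
    (Inew + ∫ x : ℝ, (deriv φt x) ^ 2 ≤ Iold + ∫ x : ℝ, (deriv φ x) ^ 2) ∧
    ((∫ x : ℝ, (deriv φt x) ^ 2 < ∫ x : ℝ, (deriv φ x) ^ 2) ↔ s ≠ 0) := by
  have hsplit := integral_eq_of_const_on_Icc_of_zero_on_Ioi hL2 ha.le (b := x₃) (s := s ^ 2)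
    (fun x hx => by rw [hs x ⟨hx.1, by linarith [hx.2]⟩])
    (fun x hx => by rw [h0 x (Ioi_subset_Ici_self hx), zero_pow two_ne_zero])
  have henergy : ∫ x, deriv φt x ^ 2 = (∫ x, deriv φ x ^ 2) - a * s ^ 2 := by
    rw [hφt, integral_sq_deriv_splice hL2 (by linarith), sub_add_cancel, hsplit]
    ring
  refine ⟨henergy, ?_, ?_⟩
  · linarith [mul_nonneg ha.le (sq_nonneg s)]
  · rw [henergy, sub_lt_self_iff, mul_pos_iff_of_pos_left ha, sq_pos_iff]

/-- Splicing decreases energy on `ℝ`.  Let `(u,v)` be admissible with Poisson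
potential `φ` (C¹, `−φ'' = u − v` a.e., `φ' ∈ L²`), vanishing on the gap
`(x₁,x₂)` (where `φ'` is constant `= s`) and on `(x₃,∞)` (where `φ' = 0`).
Translating the right part left by `a ∈ (0, x₂−x₁]` gives the spliced
potential `φ̃` with `∫(φ̃')² = ∫(φ')² − a s²`; if moreover the interfacial
energy does not increase (`Inew ≤ Iold`), then the total energy satisfies
`F₁(ū,v̄) = Inew + ∫(φ̃')² ≤ Iold + ∫(φ')² = F₁(u,v)`, with strict inequality
in the `H^{-1}` term iff `s ≠ 0`. -/
theorem splice_decreases_energy (x₁ x₂ x₃ a s : ℝ)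
    (h12 : x₁ < x₂) (h23 : x₂ < x₃) (ha : 0 < a) (ha' : a ≤ x₂ - x₁)
    (u v φ : ℝ → ℝ)
    (hu01 : ∀ᵐ x : ℝ, u x = 0 ∨ u x = 1) (hv01 : ∀ᵐ x : ℝ, v x = 0 ∨ v x = 1)
    (huv : ∀ᵐ x : ℝ, u x * v x = 0)
    (hφ : ContDiff ℝ 1 φ)
    (hφ'' : ∀ᵐ x : ℝ, deriv (deriv φ) x = v x - u x)
    (hL2 : Integrable (fun x => (deriv φ x) ^ 2))
    (hgap : ∀ x ∈ Set.Ioo x₁ x₂, u x = 0 ∧ v x = 0)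
    (hright : ∀ x ∈ Set.Ioi x₃, u x = 0 ∧ v x = 0)
    (hs : ∀ x ∈ Set.Icc x₁ x₂, deriv φ x = s)
    (h0 : ∀ x ∈ Set.Ici x₃, deriv φ x = 0)
    (φt : ℝ → ℝ)
    (hφt : φt = fun x =>
      if x ≤ x₁ then φ x
      else if x < x₃ - a then φ (x + a) - φ (x₁ + a) + φ x₁
      else φ x₃ - φ (x₁ + a) + φ x₁)
    (Iold Inew : ℝ) (hI : Inew ≤ Iold) :
    (∫ x : ℝ, (deriv φt x) ^ 2 = (∫ x : ℝ, (deriv φ x) ^ 2) - a * s ^ 2) ∧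
    (Inew + ∫ x : ℝ, (deriv φt x) ^ 2 ≤ Iold + ∫ x : ℝ, (deriv φ x) ^ 2) ∧
    ((∫ x : ℝ, (deriv φt x) ^ 2 < ∫ x : ℝ, (deriv φ x) ^ 2) ↔ s ≠ 0) :=
  splice_decreases_energy_general x₁ x₂ x₃ a s h23 ha ha' φ hL2 hs h0 φt hφt Iold Inew hI
end
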